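/- arXiv:1411.6512 — 4 statements merged into one kernel-verified Lean document; each statement's English description precedes it below -/
import Mathlib

section
/- Let K_1,...,K_L and K'_1,...,K'_L be symmetric positive definite matrices with K_l, K'_l of size m_l×m_l, each satisfying the normalization (K_l)_{11} = (K'_l)_{11} = 1 for l = 2,...,L. If K_L ⊗ ... ⊗ K_1 = K'_L ⊗ ... ⊗ K'_1, then K_l = K'_l for all l = 1,...,L. -/
open Matrix Real

noncomputable section

/-- The `L`-fold Kronecker product `K_L ⊗ ... ⊗ K_1`, realized as a matrix indexed by
multi-indices: its `(i,j)` entry is `∏ l, K l (i l) (j l)`. -/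
def kron (L : ℕ) (m : Fin L → ℕ) (K : ∀ l, Matrix (Fin (m l)) (Fin (m l)) ℝ) :
    Matrix (∀ l, Fin (m l)) (∀ l, Fin (m l)) ℝ :=
  fun i j => ∏ l, K l (i l) (j l)

/-! Fix a base multi-index `z`. The entries of `K_L ⊗ ... ⊗ K_1` whose multi-indices differ
from `z` only in slot `l` are the entries of `K_l`, scaled by `∏_{k ≠ l} (K_k)_{z_k z_k}`.
The normalization pins down these scale factors: at `(z, z)` all of them but the first are `1`,
so the first is read off the product, and then every factor is recovered by cancelling its
(positive) scale. -/

theorem eq_of_prod_eq_of_forall_ne_eq_one {ι M : Type*} [Fintype ι] [CommMonoid M]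
    {f g : ι → M} (i₀ : ι) (hf : ∀ i ≠ i₀, f i = 1) (hg : ∀ i ≠ i₀, g i = 1)
    (h : ∏ i, f i = ∏ i, g i) : f = g := by
  funext i
  by_cases hi : i = i₀
  · rwa [hi, ← Fintype.prod_eq_single i₀ hf, ← Fintype.prod_eq_single i₀ hg]
  · rw [hf i hi, hg i hi]

theorem kron_update_update {L : ℕ} {m : Fin L → ℕ} (K : ∀ l, Matrix (Fin (m l)) (Fin (m l)) ℝ)
    (z : ∀ l, Fin (m l)) (l : Fin L) (i j : Fin (m l)) :
    kron L m K (Function.update z l i) (Function.update z l j) =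
      K l i j * ∏ k ∈ {l}ᶜ, K k (z k) (z k) := by
  rw [kron, Fintype.prod_eq_mul_prod_compl l]
  congr 1
  · simp only [Function.update_self]
  · refine Finset.prod_congr rfl fun k hk => ?_
    have hkl : k ≠ l := by simpa using hk
    rw [Function.update_of_ne hkl, Function.update_of_ne hkl]

theorem eq_of_kron_eq_of_diag_eq {L : ℕ} {m : Fin L → ℕ}
    {K K' : ∀ l, Matrix (Fin (m l)) (Fin (m l)) ℝ} (z : ∀ l, Fin (m l))
    (hz : ∀ k, K k (z k) (z k) ≠ 0) (hdiag : ∀ k, K k (z k) (z k) = K' k (z k) (z k))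
    (heq : kron L m K = kron L m K') (l : Fin L) : K l = K' l := by
  ext i j
  have hentry := congr_fun₂ heq (Function.update z l i) (Function.update z l j)
  simp only [kron_update_update, ← hdiag] at hentry
  exact mul_right_cancel₀ (Finset.prod_ne_zero_iff.mpr fun k _ => hz k) hentry

theorem stmt8_general (L : ℕ) (m : Fin L → ℕ) (hm : ∀ l, 0 < m l)
    (K K' : ∀ l, Matrix (Fin (m l)) (Fin (m l)) ℝ)
    (hK : ∀ l, (K l).PosDef)
    (hnorm : ∀ l : Fin L, (l : ℕ) ≠ 0 → K l ⟨0, hm l⟩ ⟨0, hm l⟩ = 1)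
    (hnorm' : ∀ l : Fin L, (l : ℕ) ≠ 0 → K' l ⟨0, hm l⟩ ⟨0, hm l⟩ = 1)
    (heq : kron L m K = kron L m K') :
    ∀ l, K l = K' l := by
  intro l
  let z : ∀ k, Fin (m k) := fun k => ⟨0, hm k⟩
  have hdiag : (fun k => K k (z k) (z k)) = fun k => K' k (z k) (z k) :=
    eq_of_prod_eq_of_forall_ne_eq_one ⟨0, l.pos⟩
      (fun k hk => hnorm k (Fin.val_ne_iff.mpr hk)) (fun k hk => hnorm' k (Fin.val_ne_iff.mpr hk))
      (congr_fun₂ heq z z)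
  exact eq_of_kron_eq_of_diag_eq z (fun k => (hK k).diag_pos.ne') (congr_fun hdiag) heq l

/-- Identifiability of the factors of a separable (Kronecker-product) precision matrix under
the normalization `(K_l)_{11} = 1` for all `l` other than the first: if
`K_L ⊗ ... ⊗ K_1 = K'_L ⊗ ... ⊗ K'_1` with all factors symmetric positive definite and
normalized, then `K_l = K'_l` for every `l`. -/
theorem stmt8 (L : ℕ) (m : Fin L → ℕ) (hm : ∀ l, 0 < m l)
    (K K' : ∀ l, Matrix (Fin (m l)) (Fin (m l)) ℝ)
    (hK : ∀ l, (K l).PosDef) (hK' : ∀ l, (K' l).PosDef)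
    (hnorm : ∀ l : Fin L, (l : ℕ) ≠ 0 → K l ⟨0, hm l⟩ ⟨0, hm l⟩ = 1)
    (hnorm' : ∀ l : Fin L, (l : ℕ) ≠ 0 → K' l ⟨0, hm l⟩ ⟨0, hm l⟩ = 1)
    (heq : kron L m K = kron L m K') :
    ∀ l, K l = K' l :=
  stmt8_general L m hm K K' hK hnorm hnorm' heq
end
end

section
/- Let G = (V,E) be an undirected graph on V = {1,...,p} and K ∈ P_G with Cholesky decomposition K = φᵀφ where φ is upper triangular with positive diagonal. Then φ is uniquely determined by its entries indexed by the set ν(G) = {(i,i) : i ∈ V} ∪ {(i,j) : i < j, (i,j) ∈ E}: specifically, φ_{1j} = 0 for j ≥ 2 with (1,j) ∉ E, and φ_{ij} = -(1/φ_{ii}) ∑_{k=1}^{i-1} φ_{ki} φ_{kj} for 2 ≤ i < j with (i,j) ∉ E. -/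
open Matrix

namespace Matrix.BlockTriangular

variable {ι R : Type*} [Fintype ι] [LinearOrder ι]

theorem transpose_mul_self_apply [NonUnitalNonAssocSemiring R] {φ : Matrix ι ι R}
    (hφ : φ.BlockTriangular id) (i j : ι) :
    (φᵀ * φ) i j = ∑ k ∈ Finset.univ.filter (· < i), φ k i * φ k j + φ i i * φ i j := by
  rw [mul_apply, ← Finset.sum_filter_add_sum_filter_not Finset.univ (· < i)]
  congr 1
  refine Finset.sum_eq_single_of_mem i (by simp) fun k hk hki => ?_
  simp only [Finset.mem_filter, Finset.mem_univ, true_and, not_lt] at hk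
  simp [hφ (lt_of_le_of_ne hk (Ne.symm hki))]

theorem eq_of_transpose_mul_self_apply_eq_zero [Field R] {φ : Matrix ι ι R}
    (hφ : φ.BlockTriangular id) {i j : ι} (hij : (φᵀ * φ) i j = 0) (hii : φ i i ≠ 0) :
    φ i j = -(1 / φ i i) * ∑ k ∈ Finset.univ.filter (· < i), φ k i * φ k j := by
  rw [hφ.transpose_mul_self_apply, add_eq_zero_iff_eq_neg'] at hij
  field_simp
  linear_combination hij

end Matrix.BlockTriangular

theorem stmt9_general (p : ℕ) (hp : 0 < p) (E : Fin p → Fin p → Prop)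
    (K φ : Matrix (Fin p) (Fin p) ℝ)
    (hKG : ∀ i j, i ≠ j → ¬ E i j → K i j = 0)
    (hchol : K = φᵀ * φ)
    (hut : ∀ i j : Fin p, j < i → φ i j = 0)
    (hdiag : ∀ i, 0 < φ i i) :
    (∀ j : Fin p, (⟨0, hp⟩ : Fin p) < j → ¬ E ⟨0, hp⟩ j → φ ⟨0, hp⟩ j = 0) ∧
    (∀ i j : Fin p, (⟨0, hp⟩ : Fin p) < i → i < j → ¬ E i j →
      φ i j = -(1 / φ i i) * ∑ k ∈ Finset.univ.filter (· < i), φ k i * φ k j) := by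
  have hφ : φ.BlockTriangular id := fun i j h => hut i j h
  have entry_eq {i j : Fin p} (hij : i < j) (hE : ¬ E i j) :
      φ i j = -(1 / φ i i) * ∑ k ∈ Finset.univ.filter (· < i), φ k i * φ k j :=
    hφ.eq_of_transpose_mul_self_apply_eq_zero (hchol ▸ hKG i j hij.ne hE) (hdiag i).ne'
  refine ⟨fun j h0j hE => ?_, fun i j _ hij hE => entry_eq hij hE⟩
  rw [entry_eq h0j hE]
  simp [Fin.lt_def]

/-- Completion of the Cholesky factor with respect to a graph (Roverato 2002): let
`K ∈ P_G` (positive definite with zeros at non-edges of `G`) with Cholesky decomposition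
`K = φᵀφ`, `φ` upper triangular with positive diagonal. Then the entries of `φ` outside
`ν(G) = {(i,i)} ∪ {(i,j) : i < j, (i,j) ∈ E}` are determined by the free entries:
`φ_{1j} = 0` for `j ≥ 2` with `(1,j) ∉ E`, and
`φ_{ij} = -(1/φ_{ii}) ∑_{k<i} φ_{ki} φ_{kj}` for `2 ≤ i < j` with `(i,j) ∉ E`. -/
theorem stmt9 (p : ℕ) (hp : 0 < p) (E : Fin p → Fin p → Prop)
    (K φ : Matrix (Fin p) (Fin p) ℝ) (hK : K.PosDef)
    (hKG : ∀ i j, i ≠ j → ¬ E i j → K i j = 0)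
    (hchol : K = φᵀ * φ)
    (hut : ∀ i j : Fin p, j < i → φ i j = 0)
    (hdiag : ∀ i, 0 < φ i i) :
    (∀ j : Fin p, (⟨0, hp⟩ : Fin p) < j → ¬ E ⟨0, hp⟩ j → φ ⟨0, hp⟩ j = 0) ∧
    (∀ i j : Fin p, (⟨0, hp⟩ : Fin p) < i → i < j → ¬ E i j →
      φ i j = -(1 / φ i i) * ∑ k ∈ Finset.univ.filter (· < i), φ k i * φ k j) :=
  stmt9_general p hp E K φ hKG hchol hut hdiag
end

section
/- Let G have edges E and consider the map from K ∈ P_G to the free elements {φ_{ij} : (i,j) ∈ ν(G)} of its Cholesky factor K = φᵀφ. The Jacobian determinant of this change of variables is J(K → φ) = 2^p ∏_{i=1}^p φ_{ii}^{d_i^G + 1}, where d_i^G = |bd_G(i) ∩ {i+1,...,p}|. -/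
open Matrix Real

noncomputable section

/-- The set `ν(G) = {(i,i) : i ∈ V} ∪ {(i,j) : i < j, (i,j) ∈ E}` of free Cholesky entries. -/
def nuG (p : ℕ) (E : Fin p → Fin p → Prop) [DecidableRel E] : Finset (Fin p × Fin p) :=
  Finset.univ.filter (fun e => e.1 = e.2 ∨ (e.1 < e.2 ∧ E e.1 e.2))

/-!
Order the free coordinates row-major, i.e. lexicographically. By well-founded induction along
this order, every entry `φ i j` of the completed factor is differentiable and its derivative only
involves free coordinates at positions `≤ (i, j)`: a completed entry is a rational expression in
entries of earlier rows. As `K i j = ∑ k, φ k i * φ k j` and only rows `k ≤ i` contribute, the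
Jacobian of `φ ↦ K` is triangular. On its diagonal only the term `k = i` involves the coordinate
`φ i j` itself, so `∂K i j / ∂φ i j` is `φ i i` for `i < j` and `2 φ i i` for `i = j`: row `i`
contributes `2 φ i i * φ i i ^ d i`.
-/

open Finset

section SupportedFunctionals

variable {𝕜 ι : Type*} [NontriviallyNormedField 𝕜] [DecidableEq ι]

def supportedFunctionals (s : Set ι) : Submodule 𝕜 ((ι → 𝕜) →L[𝕜] 𝕜) where
  carrier := {L | ∀ e ∉ s, L (Pi.single e 1) = 0}
  add_mem' hL hM e he := by simp [hL e he, hM e he]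
  zero_mem' _ _ := rfl
  smul_mem' c L hL e he := by simp [hL e he]

theorem supportedFunctionals_mono {s t : Set ι} (hst : s ⊆ t) :
    supportedFunctionals (𝕜 := 𝕜) s ≤ supportedFunctionals t :=
  fun _ hL e he => hL e fun hs => he (hst hs)

theorem proj_mem_supportedFunctionals {s : Set ι} {e : ι} (he : e ∈ s) :
    ContinuousLinearMap.proj (R := 𝕜) (φ := fun _ : ι => 𝕜) e ∈ supportedFunctionals s :=
  fun _ he' => Pi.single_eq_of_ne (M := fun _ => 𝕜) (ne_of_mem_of_not_mem he he') 1

end SupportedFunctionals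

section HasFDerivAtIn

variable {𝕜 F : Type*} [NontriviallyNormedField 𝕜] [NormedAddCommGroup F] [NormedSpace 𝕜 F]
  {S T : Submodule 𝕜 (F →L[𝕜] 𝕜)} {φ ψ : F → 𝕜} {x : F}

def HasFDerivAtIn (S : Submodule 𝕜 (F →L[𝕜] 𝕜)) (φ : F → 𝕜) (x : F) : Prop :=
  ∃ L ∈ S, HasFDerivAt φ L x

theorem HasFDerivAtIn.mono (h : HasFDerivAtIn S φ x) (hST : S ≤ T) : HasFDerivAtIn T φ x :=
  let ⟨L, hL, hφ⟩ := h; ⟨L, hST hL, hφ⟩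

theorem HasFDerivAtIn.differentiableAt (h : HasFDerivAtIn S φ x) : DifferentiableAt 𝕜 φ x :=
  let ⟨_, _, hφ⟩ := h; hφ.differentiableAt

theorem HasFDerivAtIn.fderiv_mem (h : HasFDerivAtIn S φ x) : fderiv 𝕜 φ x ∈ S :=
  let ⟨_, hL, hφ⟩ := h; hφ.fderiv ▸ hL

theorem hasFDerivAtIn_const (c : 𝕜) : HasFDerivAtIn S (fun _ => c) x :=
  ⟨0, S.zero_mem, hasFDerivAt_const c x⟩

theorem HasFDerivAtIn.mul (hφ : HasFDerivAtIn S φ x) (hψ : HasFDerivAtIn S ψ x) :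
    HasFDerivAtIn S (fun y => φ y * ψ y) x :=
  let ⟨L, hL, hφ⟩ := hφ
  let ⟨M, hM, hψ⟩ := hψ
  ⟨φ x • M + ψ x • L, S.add_mem (S.smul_mem _ hM) (S.smul_mem _ hL), hφ.mul hψ⟩

theorem HasFDerivAtIn.comp_hasDerivAt {g : 𝕜 → 𝕜} {g' : 𝕜} (hφ : HasFDerivAtIn S φ x)
    (hg : HasDerivAt g g' (φ x)) : HasFDerivAtIn S (fun y => g (φ y)) x :=
  let ⟨L, hL, hφ⟩ := hφ
  ⟨g' • L, S.smul_mem _ hL, hg.comp_hasFDerivAt x hφ⟩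

theorem HasFDerivAtIn.sum {ι : Type*} {u : Finset ι} {φ : ι → F → 𝕜}
    (h : ∀ k ∈ u, HasFDerivAtIn S (φ k) x) : HasFDerivAtIn S (fun y => ∑ k ∈ u, φ k y) x := by
  choose! L hL hφ using h
  exact ⟨∑ k ∈ u, L k, S.sum_mem hL, HasFDerivAt.fun_sum hφ⟩

end HasFDerivAtIn

section Pi

variable {𝕜 ι : Type*} [NontriviallyNormedField 𝕜] [Fintype ι] [DecidableEq ι] {s : Set ι}
  {φ : (ι → 𝕜) → 𝕜} {x : ι → 𝕜}

theorem hasFDerivAtIn_apply {e : ι} (he : e ∈ s) :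
    HasFDerivAtIn (supportedFunctionals s) (fun y : ι → 𝕜 => y e) x :=
  ⟨_, proj_mem_supportedFunctionals he, hasFDerivAt_apply e x⟩

theorem HasFDerivAtIn.fderiv_single_eq_zero (h : HasFDerivAtIn (supportedFunctionals s) φ x)
    {e : ι} (he : e ∉ s) : fderiv 𝕜 φ x (Pi.single e 1) = 0 :=
  h.fderiv_mem e he

theorem det_fderiv_eq_prod_of_triangular {α : Type*} [LinearOrder α] {pos : ι → α}
    (hpos : Function.Injective pos) {Φ : (ι → 𝕜) → ι → 𝕜}
    (hΦ : ∀ e, HasFDerivAtIn (supportedFunctionals (pos ⁻¹' Set.Iic (pos e))) (fun y => Φ y e) x) :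
    LinearMap.det (fderiv 𝕜 Φ x).toLinearMap =
      ∏ e, fderiv 𝕜 (fun y => Φ y e) x (Pi.single e 1) := by
  have hΦx : HasFDerivAt Φ (ContinuousLinearMap.pi fun e => fderiv 𝕜 (fun y => Φ y e) x) x :=
    hasFDerivAt_pi (φ := fun e y => Φ y e) |>.2 fun e => (hΦ e).differentiableAt.hasFDerivAt
  rw [hΦx.fderiv, ← LinearMap.det_toMatrix (Pi.basisFun 𝕜 ι)]
  let : LinearOrder ι := LinearOrder.lift' pos hpos
  refine (det_of_isLowerTriangular _ fun e e' hee' => ?_).trans ?_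
  · simpa [LinearMap.toMatrix_apply] using
      (hΦ e).fderiv_single_eq_zero (e := e') (not_le.2 hee')
  · simp

end Pi

section Cholesky

variable {p : ℕ} {E : Fin p → Fin p → Prop} [DecidableRel E]

theorem diag_mem_nuG (i : Fin p) : (i, i) ∈ nuG p E := by
  simp [nuG]

theorem le_of_mem_nuG {q : Fin p × Fin p} (hq : q ∈ nuG p E) : q.1 ≤ q.2 := by
  simp only [nuG, mem_filter, Finset.mem_univ, true_and] at hq
  exact hq.elim le_of_eq fun h => h.1.le

theorem lt_and_not_of_notMem_nuG {i j : Fin p} (hji : ¬ j < i) (hij : (i, j) ∉ nuG p E) :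
    i < j ∧ ¬ E i j := by
  simp only [nuG, mem_filter, Finset.mem_univ, true_and, not_or, not_and] at hij
  exact ⟨lt_of_le_of_ne (not_lt.1 hji) hij.1, hij.2 (lt_of_le_of_ne (not_lt.1 hji) hij.1)⟩

theorem prod_nuG {M : Type*} [CommMonoid M] (F : Fin p × Fin p → M) :
    ∏ q ∈ nuG p E, F q = ∏ i, F (i, i) * ∏ j ∈ univ.filter (fun j => i < j ∧ E i j), F (i, j) := by
  rw [nuG, prod_filter, Fintype.prod_prod_type]
  refine prod_congr rfl fun i _ => ?_
  rw [← prod_filter, ← prod_insert (s := univ.filter fun j => i < j ∧ E i j)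
    (f := fun j => F (i, j)) (by simp)]
  congr 1
  ext j
  simp [eq_comm]

theorem prod_nuG_ite_two_mul {R : Type*} [CommSemiring R] (c : Fin p → R) :
    ∏ q ∈ nuG p E, (if q.1 = q.2 then 2 else 1) * c q.1 =
      2 ^ p * ∏ i, c i ^ ((univ.filter fun j => i < j ∧ E i j).card + 1) := by
  have hoff (i : Fin p) : ∀ j ∈ univ.filter (fun j => i < j ∧ E i j),
      (if i = j then (2 : R) else 1) * c i = c i := fun j hj => by
    rw [if_neg (mem_filter.1 hj).2.1.ne, one_mul]
  calc _ = ∏ i : Fin p, 2 * c i ^ ((univ.filter fun j => i < j ∧ E i j).card + 1) := by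
        refine (prod_nuG _).trans (prod_congr rfl fun i _ => ?_)
        dsimp only
        rw [prod_congr rfl (hoff i), prod_const, if_pos rfl, pow_succ', mul_assoc]
    _ = _ := by rw [prod_mul_distrib, prod_const, card_univ, Fintype.card_fin]

def lexPos (e : {e // e ∈ nuG p E}) : Fin p ×ₗ Fin p := toLex e.1

theorem lexPos_injective : Function.Injective (lexPos (E := E)) :=
  fun _ _ h => Subtype.ext (toLex.injective h)

structure IsCholeskyCompletion (comp : ({e // e ∈ nuG p E} → ℝ) → Matrix (Fin p) (Fin p) ℝ) :
    Prop where
  upper : ∀ f, ∀ i j : Fin p, j < i → comp f i j = 0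
  free : ∀ f (e : {e // e ∈ nuG p E}), comp f e.1.1 e.1.2 = f e
  completion : ∀ f (i j : Fin p), i < j → ¬ E i j →
    comp f i j = -(1 / comp f i i) * ∑ k ∈ univ.filter (· < i), comp f k i * comp f k j

namespace IsCholeskyCompletion

variable {comp : ({e // e ∈ nuG p E} → ℝ) → Matrix (Fin p) (Fin p) ℝ}
  {f : {e // e ∈ nuG p E} → ℝ}

theorem hasFDerivAtIn_entry (hc : IsCholeskyCompletion comp) (hf : ∀ i, comp f i i ≠ 0)
    (q : Fin p × Fin p) :
    HasFDerivAtIn (supportedFunctionals (lexPos ⁻¹' Set.Iic (toLex q)))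
      (fun g => comp g q.1 q.2) f := by
  induction hr : toLex q using WellFoundedLT.induction generalizing q with
  | _ r ih =>
  subst hr
  obtain ⟨i, j⟩ := q
  have below {k l : Fin p} (hkl : toLex (k, l) < toLex (i, j)) :
      HasFDerivAtIn (supportedFunctionals (lexPos ⁻¹' Set.Iic (toLex (i, j))))
        (fun g => comp g k l) f :=
    (ih _ hkl (k, l) rfl).mono
      (supportedFunctionals_mono fun _ he => le_trans (Set.mem_Iic.1 he) hkl.le)
  by_cases hji : j < i
  · simp only [hc.upper _ i j hji]
    exact hasFDerivAtIn_const 0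
  by_cases hmem : (i, j) ∈ nuG p E
  · simp only [fun g => hc.free g ⟨(i, j), hmem⟩]
    exact hasFDerivAtIn_apply (le_refl (toLex (i, j)))
  obtain ⟨hij, hE⟩ := lt_and_not_of_notMem_nuG hji hmem
  let d : {e // e ∈ nuG p E} := ⟨(i, i), diag_mem_nuG i⟩
  have hd : ∀ g, comp g i i = g d := fun g => hc.free g d
  simp only [fun g => hc.completion g i j hij hE, hd, one_div]
  refine HasFDerivAtIn.mul ?_ (HasFDerivAtIn.sum fun k hk => ?_)
  · refine (hasFDerivAtIn_apply ?_).comp_hasDerivAt (g := fun t => -t⁻¹)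
      (hasDerivAt_inv ?_).fun_neg
    · exact Prod.Lex.toLex_le_toLex.2 (Or.inr ⟨rfl, hij.le⟩)
    · simpa [hd] using hf i
  · have hki : k < i := (mem_filter.1 hk).2
    exact (below (Prod.Lex.toLex_lt_toLex.2 (Or.inl hki))).mul
      (below (Prod.Lex.toLex_lt_toLex.2 (Or.inl hki)))

theorem hasFDerivAtIn_mul_entries_of_ne (hc : IsCholeskyCompletion comp)
    (hf : ∀ i, comp f i i ≠ 0) {e : {e // e ∈ nuG p E}} {k : Fin p} (hk : k ≠ e.1.1) :
    HasFDerivAtIn (supportedFunctionals (lexPos ⁻¹' Set.Iio (lexPos e)))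
      (fun g => comp g k e.1.1 * comp g k e.1.2) f := by
  rcases lt_or_gt_of_ne hk with hlt | hgt
  · have hbelow (l : Fin p) := (hc.hasFDerivAtIn_entry hf (k, l)).mono
      (supportedFunctionals_mono (Set.preimage_mono (Set.Iic_subset_Iio.2
        (Prod.Lex.toLex_lt_toLex.2 (Or.inl hlt) : toLex (k, l) < lexPos e))))
    exact (hbelow e.1.1).mul (hbelow e.1.2)
  · simp only [hc.upper _ k e.1.1 hgt, zero_mul]
    exact hasFDerivAtIn_const 0

theorem hasFDerivAtIn_mul_entries (hc : IsCholeskyCompletion comp)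
    (hf : ∀ i, comp f i i ≠ 0) (e : {e // e ∈ nuG p E}) (k : Fin p) :
    HasFDerivAtIn (supportedFunctionals (lexPos ⁻¹' Set.Iic (lexPos e)))
      (fun g => comp g k e.1.1 * comp g k e.1.2) f := by
  by_cases hk : k = e.1.1
  · rw [hk]
    simp only [fun g => hc.free g ⟨(e.1.1, e.1.1), diag_mem_nuG _⟩, hc.free]
    refine (hasFDerivAtIn_apply ?_).mul (hasFDerivAtIn_apply (le_refl (lexPos e)))
    exact Prod.Lex.toLex_le_toLex.2 (Or.inr ⟨rfl, le_of_mem_nuG e.2⟩)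
  · exact (hc.hasFDerivAtIn_mul_entries_of_ne hf hk).mono
      (supportedFunctionals_mono (Set.preimage_mono Set.Iio_subset_Iic_self))

theorem hasFDerivAtIn_gram_entry (hc : IsCholeskyCompletion comp) (hf : ∀ i, comp f i i ≠ 0)
    (e : {e // e ∈ nuG p E}) :
    HasFDerivAtIn (supportedFunctionals (lexPos ⁻¹' Set.Iic (lexPos e)))
      (fun g => ((comp g)ᵀ * comp g) e.1.1 e.1.2) f := by
  simp only [mul_apply, transpose_apply]
  exact HasFDerivAtIn.sum fun k _ => hc.hasFDerivAtIn_mul_entries hf e k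

theorem fderiv_gram_entry_apply_single (hc : IsCholeskyCompletion comp)
    (hf : ∀ i, comp f i i ≠ 0) (e : {e // e ∈ nuG p E}) :
    fderiv ℝ (fun g => ((comp g)ᵀ * comp g) e.1.1 e.1.2) f (Pi.single e 1) =
      (if e.1.1 = e.1.2 then 2 else 1) * comp f e.1.1 e.1.1 := by
  let d : {e // e ∈ nuG p E} := ⟨(e.1.1, e.1.1), diag_mem_nuG _⟩
  have hd (g : {e // e ∈ nuG p E} → ℝ) : comp g e.1.1 e.1.1 = g d := hc.free g d
  have hdiag : (fun g => comp g e.1.1 e.1.1 * comp g e.1.1 e.1.2) = fun g => g d * g e := by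
    simp only [hd, hc.free]
  have hoff (k : Fin p) (_ : k ∈ univ) (hk : k ≠ e.1.1) :=
    (hc.hasFDerivAtIn_mul_entries_of_ne hf hk).fderiv_single_eq_zero (lt_irrefl (lexPos e))
  simp only [mul_apply, transpose_apply]
  rw [fderiv_fun_sum fun k _ => (hc.hasFDerivAtIn_mul_entries hf e k).differentiableAt,
    _root_.sum_apply, sum_eq_single e.1.1 hoff (by simp), hdiag,
    ((hasFDerivAt_apply d f).fun_mul (hasFDerivAt_apply e f)).fderiv]
  by_cases hde : e.1.1 = e.1.2
  · have hde' : d = e := Subtype.ext (Prod.ext rfl hde)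
    rw [hd, hde']
    simp [hde, two_mul]
  · have : d ≠ e := fun h => hde (congrArg (fun x => x.1.2) h)
    simp [this, hde, hd]

end IsCholeskyCompletion

end Cholesky

/-- `comp f` is the completed Cholesky factor: the upper-triangular matrix with free entries `f`
on `ν(G)` whose other entries are determined by the completion equations. -/
theorem stmt10_general (p : ℕ) (E : Fin p → Fin p → Prop) [DecidableRel E]
    (comp : ({e // e ∈ nuG p E} → ℝ) → Matrix (Fin p) (Fin p) ℝ)
    (hcompUT : ∀ f, ∀ i j : Fin p, j < i → comp f i j = 0)
    (hcompFree : ∀ (f : {e // e ∈ nuG p E} → ℝ) (e : {e // e ∈ nuG p E}),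
      comp f e.1.1 e.1.2 = f e)
    (hcompCompl : ∀ (f : {e // e ∈ nuG p E} → ℝ) (i j : Fin p), i < j → ¬ E i j →
      comp f i j = -(1 / comp f i i) * ∑ k ∈ Finset.univ.filter (· < i),
        comp f k i * comp f k j) :
    ∀ f : {e // e ∈ nuG p E} → ℝ, (∀ i, 0 < comp f i i) →
      LinearMap.det
        (fderiv ℝ
          (fun g : {e // e ∈ nuG p E} → ℝ =>
            fun e : {e // e ∈ nuG p E} => ((comp g)ᵀ * comp g) e.1.1 e.1.2) f).toLinearMap
        = 2 ^ p * ∏ i : Fin p,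
            comp f i i ^ ((Finset.univ.filter (fun j => i < j ∧ E i j)).card + 1) := by
  intro f hpos
  have hc : IsCholeskyCompletion comp := ⟨hcompUT, hcompFree, hcompCompl⟩
  have hf : ∀ i, comp f i i ≠ 0 := fun i => (hpos i).ne'
  rw [det_fderiv_eq_prod_of_triangular lexPos_injective (hc.hasFDerivAtIn_gram_entry hf)]
  simp only [hc.fderiv_gram_entry_apply_single hf]
  exact (prod_coe_sort (nuG p E) fun q => (if q.1 = q.2 then 2 else 1) * comp f q.1 q.1).trans
    (prod_nuG_ite_two_mul fun i => comp f i i)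

/-- Jacobian of the change of variables from `K ∈ P_G` to the free elements
`{φ_{ij} : (i,j) ∈ ν(G)}` of its Cholesky factor `K = φᵀφ`:
`J(K → φ) = 2^p ∏ i, φ_{ii}^{d_i^G + 1}` where `d_i^G = |bd_G(i) ∩ {i+1,...,p}|`.
Here `comp` is the completion operator: given the free elements `f`, `comp f` is the
upper-triangular matrix agreeing with `f` on `ν(G)` whose non-free entries satisfy the
completion equations with respect to `G`; `Φ` maps the free elements of `φ` to the
corresponding entries of `K = φᵀφ` indexed by `ν(G)`. -/
theorem stmt10 (p : ℕ) (E : Fin p → Fin p → Prop) [DecidableRel E]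
    (hEsym : ∀ i j, E i j → E j i) (hEirr : ∀ i, ¬ E i i)
    (comp : ({e // e ∈ nuG p E} → ℝ) → Matrix (Fin p) (Fin p) ℝ)
    (hcompUT : ∀ f, ∀ i j : Fin p, j < i → comp f i j = 0)
    (hcompFree : ∀ (f : {e // e ∈ nuG p E} → ℝ) (e : {e // e ∈ nuG p E}),
      comp f e.1.1 e.1.2 = f e)
    (hcompCompl : ∀ (f : {e // e ∈ nuG p E} → ℝ) (i j : Fin p), i < j → ¬ E i j →
      comp f i j = -(1 / comp f i i) * ∑ k ∈ Finset.univ.filter (· < i),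
        comp f k i * comp f k j) :
    ∀ f : {e // e ∈ nuG p E} → ℝ, (∀ i, 0 < comp f i i) →
      LinearMap.det
        (fderiv ℝ
          (fun g : {e // e ∈ nuG p E} → ℝ =>
            fun e : {e // e ∈ nuG p E} => ((comp g)ᵀ * comp g) e.1.1 e.1.2) f).toLinearMap
        = 2 ^ p * ∏ i : Fin p,
            comp f i i ^ ((Finset.univ.filter (fun j => i < j ∧ E i j)).card + 1) :=
  stmt10_general p E comp hcompUT hcompFree hcompCompl
end
end

section
/- Let X̃ be an m_l × m_{-l} matrix following a matrix-variate normal distribution with mean μ 1ᵀ_{m_{-l}} (μ ∈ ℝ^{m_l}), row precision K_l and column precision K_{-l} (i.e., vec(X̃) ~ N(vec(μ1ᵀ), (K_{-l} ⊗ K_l)^{-1})), and let μ have prior N(μ⁰, Ω^{-1}) scaled so the prior precision is m_{-l}Ω. Then the posterior of μ given X̃ is N(m_μ, K_μ^{-1}) with K_μ = (1ᵀ K_{-l} 1) K_l + m_{-l}Ω and m_μ = K_μ^{-1}[K_l X̃ K_{-l} 1 + m_{-l} Ω μ⁰], where 1 = 1_{m_{-l}}. -/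
open Matrix Real

noncomputable section

/-- Multivariate normal density parametrized by its precision matrix `P`, with mean `μ`. -/
def mvnDensityPrec (d : ℕ) (μ : Fin d → ℝ) (P : Matrix (Fin d) (Fin d) ℝ)
    (x : Fin d → ℝ) : ℝ :=
  (2 * π) ^ (-(d : ℝ) / 2) * Real.sqrt P.det *
    Real.exp (-((x - μ) ⬝ᵥ (P *ᵥ (x - μ))) / 2)

/-- Matrix-variate normal density on `ml × mo` matrices with mean `M`, row precision `Kl`
and column precision `Km`, i.e. `vec(X) ~ N(vec(M), (Km ⊗ Kl)⁻¹)`. -/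
def matNormDensityPrec (ml mo : ℕ) (M : Matrix (Fin ml) (Fin mo) ℝ)
    (Km : Matrix (Fin mo) (Fin mo) ℝ) (Kl : Matrix (Fin ml) (Fin ml) ℝ)
    (X : Matrix (Fin ml) (Fin mo) ℝ) : ℝ :=
  (2 * π) ^ (-(ml * mo : ℝ) / 2) * Kl.det ^ ((mo : ℝ) / 2) * Km.det ^ ((ml : ℝ) / 2) *
    Real.exp (-(Km * (X - M)ᵀ * Kl * (X - M)).trace / 2)

/-!
Up to an additive constant, the log of prior times likelihood is `-(μᵀ K_μ μ - 2 μᵀ b) / 2` with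
`K_μ = (1ᵀ K_{-l} 1) K_l + m_{-l} Ω` and `b = K_l X̃ K_{-l} 1 + m_{-l} Ω μ⁰`, because the trace form
`tr(K_{-l} (X̃ - μ1ᵀ)ᵀ K_l (X̃ - μ1ᵀ))` is quadratic in `μ`. Completing the square around
`m_μ = K_μ⁻¹ b` turns the product of densities into a positive multiple of the `N(m_μ, K_μ⁻¹)`
density.
-/

namespace Matrix

variable {n p : Type*} [Fintype n] [Fintype p]

lemma IsSymm.dotProduct_mulVec_comm {A : Matrix n n ℝ} (hA : A.IsSymm) (x y : n → ℝ) :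
    x ⬝ᵥ (A *ᵥ y) = y ⬝ᵥ (A *ᵥ x) := by
  rw [dotProduct_mulVec, ← mulVec_transpose, hA.eq, dotProduct_comm]

lemma IsSymm.dotProduct_mulVec_sub_sub {A : Matrix n n ℝ} (hA : A.IsSymm) (x y : n → ℝ) :
    (x - y) ⬝ᵥ (A *ᵥ (x - y)) = x ⬝ᵥ (A *ᵥ x) - 2 * (x ⬝ᵥ (A *ᵥ y)) + y ⬝ᵥ (A *ᵥ y) := by
  rw [mulVec_sub, dotProduct_sub, sub_dotProduct, sub_dotProduct, hA.dotProduct_mulVec_comm y x]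
  ring

lemma trace_mul_vecMulVec (A : Matrix p n ℝ) (a : n → ℝ) (b : p → ℝ) :
    (A * vecMulVec a b).trace = b ⬝ᵥ (A *ᵥ a) := by
  rw [mul_vecMulVec, trace_vecMulVec, dotProduct_comm]

lemma trace_mul_transpose_mul_mul_comm {Kl : Matrix n n ℝ} {Km : Matrix p p ℝ}
    (hKl : Kl.IsSymm) (hKm : Km.IsSymm) (Y Z : Matrix n p ℝ) :
    (Km * Yᵀ * Kl * Z).trace = (Km * Zᵀ * Kl * Y).trace := by
  calc (Km * Yᵀ * Kl * Z).trace = (Zᵀ * Kl * Y * Km).trace := by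
        rw [← trace_transpose]
        simp only [transpose_mul, transpose_transpose, hKl.eq, hKm.eq, Matrix.mul_assoc]
    _ = (Km * Zᵀ * Kl * Y).trace := by
        rw [trace_mul_comm]
        simp only [Matrix.mul_assoc]

lemma trace_mul_transpose_mul_sub_vecMulVec {Kl : Matrix n n ℝ} {Km : Matrix p p ℝ}
    (hKl : Kl.IsSymm) (hKm : Km.IsSymm) (X : Matrix n p ℝ) (μ : n → ℝ) (u : p → ℝ) :
    (Km * (X - vecMulVec μ u)ᵀ * Kl * (X - vecMulVec μ u)).trace
      = (Km * Xᵀ * Kl * X).trace - 2 * (μ ⬝ᵥ (Kl *ᵥ (X *ᵥ (Km *ᵥ u))))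
        + (u ⬝ᵥ (Km *ᵥ u)) * (μ ⬝ᵥ (Kl *ᵥ μ)) := by
  have cross : (Km * Xᵀ * Kl * vecMulVec μ u).trace = μ ⬝ᵥ (Kl *ᵥ (X *ᵥ (Km *ᵥ u))) := by
    rw [trace_mul_vecMulVec, ← mulVec_mulVec, ← mulVec_mulVec, hKm.dotProduct_mulVec_comm,
      dotProduct_comm, dotProduct_transpose_mulVec, dotProduct_comm, hKl.dotProduct_mulVec_comm]
  have square : (Km * (vecMulVec μ u)ᵀ * Kl * vecMulVec μ u).trace
      = (u ⬝ᵥ (Km *ᵥ u)) * (μ ⬝ᵥ (Kl *ᵥ μ)) := by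
    rw [trace_mul_vecMulVec, transpose_vecMulVec, ← mulVec_mulVec, ← mulVec_mulVec,
      vecMulVec_mulVec, mulVec_smul, dotProduct_smul]
    simp [mul_comm]
  simp only [transpose_sub, Matrix.mul_sub, Matrix.sub_mul, trace_sub, cross, square,
    trace_mul_transpose_mul_mul_comm hKl hKm (vecMulVec μ u) X]
  ring

lemma quadForm_prior_add_trace_eq {Kl Om K : Matrix n n ℝ} {Km : Matrix p p ℝ}
    (hKl : Kl.IsSymm) (hKm : Km.IsSymm) (hOm : Om.IsSymm) (X : Matrix n p ℝ) (u : p → ℝ)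
    (c : ℝ) (μ0 m : n → ℝ) (hK : K = (u ⬝ᵥ (Km *ᵥ u)) • Kl + c • Om)
    (hm : K *ᵥ m = Kl *ᵥ (X *ᵥ (Km *ᵥ u)) + c • (Om *ᵥ μ0)) (μ : n → ℝ) :
    (μ - μ0) ⬝ᵥ ((c • Om) *ᵥ (μ - μ0))
        + (Km * (X - vecMulVec μ u)ᵀ * Kl * (X - vecMulVec μ u)).trace
      = (μ - m) ⬝ᵥ (K *ᵥ (μ - m))
        + (μ0 ⬝ᵥ ((c • Om) *ᵥ μ0) + (Km * Xᵀ * Kl * X).trace - m ⬝ᵥ (K *ᵥ m)) := by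
  have hKsymm : K.IsSymm := hK ▸ (hKl.smul _).add (hOm.smul c)
  rw [(hOm.smul c).dotProduct_mulVec_sub_sub, trace_mul_transpose_mul_sub_vecMulVec hKl hKm,
    hKsymm.dotProduct_mulVec_sub_sub, hm, hK]
  simp only [add_mulVec, smul_mulVec, dotProduct_add, dotProduct_smul, smul_eq_mul]
  ring

end Matrix

lemma exists_mvnDensityPrec_mul_exp_eq {d : ℕ} {μ0 m : Fin d → ℝ}
    {P K : Matrix (Fin d) (Fin d) ℝ} {q : (Fin d → ℝ) → ℝ} {C : ℝ} (hP : 0 < P.det)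
    (hK : 0 < K.det)
    (h : ∀ x, (x - μ0) ⬝ᵥ (P *ᵥ (x - μ0)) + q x = (x - m) ⬝ᵥ (K *ᵥ (x - m)) + C) :
    ∃ c > 0, ∀ x, mvnDensityPrec d μ0 P x * exp (-q x / 2) = c * mvnDensityPrec d m K x := by
  refine ⟨√P.det * exp (-C / 2) / √K.det,
    div_pos (mul_pos (sqrt_pos.mpr hP) (exp_pos _)) (sqrt_pos.mpr hK), fun x => ?_⟩
  have hexp : exp (-((x - μ0) ⬝ᵥ (P *ᵥ (x - μ0))) / 2) * exp (-q x / 2)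
      = exp (-((x - m) ⬝ᵥ (K *ᵥ (x - m))) / 2) * exp (-C / 2) := by
    rw [← exp_add, ← exp_add]
    congr 1
    linarith [h x]
  unfold mvnDensityPrec
  rw [div_mul_eq_mul_div, eq_div_iff (sqrt_pos.mpr hK).ne']
  linear_combination (2 * π) ^ (-(d : ℝ) / 2) * √P.det * √K.det * hexp

lemma exists_matNormDensityPrec_eq_mul_exp {ml mo : ℕ} {Km : Matrix (Fin mo) (Fin mo) ℝ}
    {Kl : Matrix (Fin ml) (Fin ml) ℝ} (hKm : Km.PosDef) (hKl : Kl.PosDef) :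
    ∃ Z > 0, ∀ M X, matNormDensityPrec ml mo M Km Kl X
      = Z * exp (-(Km * (X - M)ᵀ * Kl * (X - M)).trace / 2) :=
  ⟨_, mul_pos (mul_pos (by positivity) (rpow_pos_of_pos hKl.det_pos _))
    (rpow_pos_of_pos hKm.det_pos _), fun _ _ => rfl⟩

lemma mvnDensityPrec_zero_prec (d : ℕ) (μ μ' x x' : Fin d → ℝ) :
    mvnDensityPrec d μ 0 x = mvnDensityPrec d μ' 0 x' := by
  simp [mvnDensityPrec]

lemma matNormDensityPrec_zero_cols (ml : ℕ) (M : Matrix (Fin ml) (Fin 0) ℝ)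
    (Km : Matrix (Fin 0) (Fin 0) ℝ) (Kl : Matrix (Fin ml) (Fin ml) ℝ)
    (X : Matrix (Fin ml) (Fin 0) ℝ) : matNormDensityPrec ml 0 M Km Kl X = 1 := by
  simp [matNormDensityPrec]

/-- Gibbs update for the dimension-`l` mean vector in a multi-way GGM with separable means:
if `X̃` is matrix-variate normal with mean `μ 1ᵀ`, row precision `Kl`, column precision
`Km` (`= K_{-l}`, of size `m_{-l} = mo`), and `μ` has prior with mean `μ⁰` and precision
`mo • Ω`, then the posterior of `μ` given `X̃` is `N(m_μ, K_μ⁻¹)` with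
`K_μ = (1ᵀ Km 1) Kl + mo Ω` and `m_μ = K_μ⁻¹ [Kl X̃ Km 1 + mo Ω μ⁰]`. -/
theorem stmt17 (ml mo : ℕ)
    (Kl Om : Matrix (Fin ml) (Fin ml) ℝ) (Km : Matrix (Fin mo) (Fin mo) ℝ)
    (hKl : Kl.PosDef) (hKm : Km.PosDef) (hOm : Om.PosDef)
    (X : Matrix (Fin ml) (Fin mo) ℝ) (μ0 : Fin ml → ℝ) :
    ∃ c : ℝ, 0 < c ∧
      ∀ μ : Fin ml → ℝ,
        mvnDensityPrec ml μ0 ((mo : ℝ) • Om) μ *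
            matNormDensityPrec ml mo (Matrix.vecMulVec μ (fun _ => 1)) Km Kl X
          = c *
            mvnDensityPrec ml
              ((((fun _ => 1) ⬝ᵥ (Km *ᵥ (fun _ => 1))) • Kl + (mo : ℝ) • Om)⁻¹ *ᵥ
                (Kl *ᵥ (X *ᵥ (Km *ᵥ (fun _ => 1))) + (mo : ℝ) • (Om *ᵥ μ0)))
              (((fun _ => 1) ⬝ᵥ (Km *ᵥ (fun _ => 1))) • Kl + (mo : ℝ) • Om) μ := by
  rcases Nat.eq_zero_or_pos mo with rfl | hmo
  · -- with no columns both precisions vanish and the likelihood is identically `1`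
    refine ⟨1, one_pos, fun μ => ?_⟩
    simp only [CharP.cast_eq_zero, zero_smul, add_zero, dotProduct_of_isEmpty,
      matNormDensityPrec_zero_cols, mul_one, one_mul]
    exact mvnDensityPrec_zero_prec _ _ _ _ _
  set s : ℝ := (fun _ => 1) ⬝ᵥ (Km *ᵥ fun _ => 1)
  set K := s • Kl + (mo : ℝ) • Om with hK
  set m := K⁻¹ *ᵥ (Kl *ᵥ (X *ᵥ (Km *ᵥ fun _ => 1)) + (mo : ℝ) • (Om *ᵥ μ0))
  have hs : 0 < s := hKm.dotProduct_mulVec_pos fun h => one_ne_zero (congrFun h ⟨0, hmo⟩)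
  have hmo' : (0 : ℝ) < mo := Nat.cast_pos.mpr hmo
  have hKpos : K.PosDef := (hKl.smul hs).add (hOm.smul hmo')
  have hm : K *ᵥ m = Kl *ᵥ (X *ᵥ (Km *ᵥ fun _ => 1)) + (mo : ℝ) • (Om *ᵥ μ0) := by
    rw [mulVec_mulVec, mul_nonsing_inv _ (isUnit_iff_ne_zero.mpr hKpos.det_pos.ne'), one_mulVec]
  obtain ⟨Z, hZ, hlik⟩ := exists_matNormDensityPrec_eq_mul_exp hKm hKl
  obtain ⟨c, hc, hpost⟩ := exists_mvnDensityPrec_mul_exp_eq (hOm.smul hmo').det_pos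
    hKpos.det_pos (quadForm_prior_add_trace_eq (isHermitian_iff_isSymm.mp hKl.1)
      (isHermitian_iff_isSymm.mp hKm.1) (isHermitian_iff_isSymm.mp hOm.1) X _ _ μ0 m hK hm)
  refine ⟨Z * c, mul_pos hZ hc, fun μ => ?_⟩
  rw [hlik, mul_left_comm, hpost]
  ring
end
end
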